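/- Let the simple star network G_J (J an interval of [n]) have weighted path matrix C. Then for all u, w ∈ S_n: if u^{-1}w ∈ S_J then σ_C(x^{u,w}) = q^{cross(π)/2} q^{incross(U(π,u,w))}, where π is the unique path family of type u^{-1}w covering G_J and U(π,u,w) is the one-row π-tableau π_{u_1}⋯π_{u_n}; otherwise σ_C(x^{u,w}) = 0. -/

import Mathlib

/- Common combinatorial setup: star networks, covering path families,
   crossing/noncrossing statistics, and the base ring ℤ[q^{1/2},q^{-1/2}]. -/

open Equiv Finset
open scoped Classical

noncomputable section

/-- The ring `ℤ[q^{1/2}, q^{-1/2}]`, realized as Laurent polynomials in the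
variable `q^{1/2}` (so the exponent-`k` monomial is `q^{k/2}`). -/
abbrev R2 : Type := LaurentPolynomial ℤ

/-- `q^{k/2}`. -/
def Qp (k : ℤ) : R2 := LaurentPolynomial.T k

/-- `q`. -/
def qq : R2 := LaurentPolynomial.T 2

/-- Coxeter length of a permutation, i.e. its inversion number. -/
def len {n : ℕ} (w : Perm (Fin n)) : ℕ :=
  ((univ : Finset (Fin n × Fin n)).filter fun p => p.1 < p.2 ∧ w p.2 < w p.1).card

/-- Membership in the interval `J = [a,b] ⊆ [n]`. -/
def memJ {n : ℕ} (J : Fin n × Fin n) (i : Fin n) : Prop := J.1 ≤ i ∧ i ≤ J.2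

/-- Membership in the subgroup `S_J ≤ S_n` generated by the adjacent
transpositions `s_a, …, s_{b-1}` of the interval `J = [a,b]`; equivalently,
the permutations supported on `[a,b]`. -/
def inSJ {n : ℕ} (J : Fin n × Fin n) (w : Perm (Fin n)) : Prop :=
  ∀ i, w i ≠ i → memJ J i

/-- A path family covering the star network `G_{J_1} ∘ ⋯ ∘ G_{J_m}` is
faithfully encoded by the permutation of the wire positions realized at each
simple-star factor: at factor `p` the paths whose current positions lie in
`J_p` pass through the central vertex and are permuted arbitrarily within
`J_p` (every entering and leaving edge being used exactly once), while all
other paths use their unique horizontal edge.  Thus a covering family is a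
sequence `vs` of permutations with `vs p` supported on `J_p`. -/
def IsPathFamily {n m : ℕ} (Js : Fin m → Fin n × Fin n)
    (vs : Fin m → Perm (Fin n)) : Prop :=
  ∀ p, inSJ (Js p) (vs p)

/-- The position of the path starting at source `i` just before factor `k`
(as a permutation of sources). -/
def posAt {n m : ℕ} (vs : Fin m → Perm (Fin n)) (k : ℕ) : Perm (Fin n) :=
  (((List.ofFn vs).take k).reverse).prod

/-- The type of a covering path family: the path starting at source `i`
terminates at sink `typeOf vs i`. -/
def typeOf {n m : ℕ} (vs : Fin m → Perm (Fin n)) : Perm (Fin n) := posAt vs m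

/-- The path from source `i` passes through the central vertex of the factor
`G_{J_p}`. -/
def centeredAt {n m : ℕ} (Js : Fin m → Fin n × Fin n) (vs : Fin m → Perm (Fin n))
    (p : Fin m) (i : Fin n) : Prop :=
  (Js p).1 < (Js p).2 ∧ memJ (Js p) (posAt vs p i)

/-- The paths from sources `i` and `j` both pass through the central vertex of
the factor `G_{J_p}`. -/
def meetAt {n m : ℕ} (Js : Fin m → Fin n × Fin n) (vs : Fin m → Perm (Fin n))
    (p : Fin m) (i j : Fin n) : Prop :=
  centeredAt Js vs p i ∧ centeredAt Js vs p j

/-- The triple `(π_i, π_j, p)` is a crossing: the two paths intersect at the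
central vertex of `G_{J_p}` and cross there. -/
def crossingAt {n m : ℕ} (Js : Fin m → Fin n × Fin n) (vs : Fin m → Perm (Fin n))
    (p : Fin m) (i j : Fin n) : Prop :=
  meetAt Js vs p i j ∧
    ¬ ((posAt vs p i < posAt vs p j) ↔ (posAt vs (p.1 + 1) i < posAt vs (p.1 + 1) j))

/-- `cross(π)`: the number of crossings of the path family. -/
def crossNum {n m : ℕ} (Js : Fin m → Fin n × Fin n)
    (vs : Fin m → Perm (Fin n)) : ℕ :=
  ((univ : Finset ((Fin n × Fin n) × Fin m)).filter fun x =>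
    x.1.1 < x.1.2 ∧ crossingAt Js vs x.2 x.1.1 x.1.2).card

/-- The triple `(π_i, π_j, p)` is a noncrossing with `π_i` entering and
leaving the central vertex of `G_{J_p}` below `π_j`. -/
def noncrossBelow {n m : ℕ} (Js : Fin m → Fin n × Fin n) (vs : Fin m → Perm (Fin n))
    (p : Fin m) (i j : Fin n) : Prop :=
  meetAt Js vs p i j ∧
    posAt vs p i < posAt vs p j ∧ posAt vs (p.1 + 1) i < posAt vs (p.1 + 1) j

/-- `incross(U)` for a tableau `U` containing the paths of `π`, recorded via
the function `col` assigning to each path (index) the index of the column of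
`U` containing it: the number of inverted noncrossings, i.e. noncrossings
`(π_i, π_j, p)` (with `π_i` below `π_j`) such that `π_j` lies in an earlier
column of `U` than `π_i`. -/
def incrossNum {n m : ℕ} (Js : Fin m → Fin n × Fin n) (vs : Fin m → Perm (Fin n))
    (col : Fin n → ℕ) : ℕ :=
  ((univ : Finset ((Fin n × Fin n) × Fin m)).filter fun x =>
    noncrossBelow Js vs x.2 x.1.1 x.1.2 ∧ col x.1.2 < col x.1.1).card

/-- The number of crossings of the two paths `π_i, π_j` strictly before the
factor `G_{J_p}`. -/
def crossBefore {n m : ℕ} (Js : Fin m → Fin n × Fin n) (vs : Fin m → Perm (Fin n))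
    (p : Fin m) (i j : Fin n) : ℕ :=
  ((univ : Finset (Fin m)).filter fun k => k < p ∧ crossingAt Js vs k i j).card

/-- The triple `(π_i, π_j, p)` is defective: the paths meet at the central
vertex of `G_{J_p}` having previously crossed an odd number of times. -/
def defectiveAt {n m : ℕ} (Js : Fin m → Fin n × Fin n) (vs : Fin m → Perm (Fin n))
    (p : Fin m) (i j : Fin n) : Prop :=
  meetAt Js vs p i j ∧ Odd (crossBefore Js vs p i j)

/-- `dfct(π)`: the number of defective triples of the path family. -/
def dfctNum {n m : ℕ} (Js : Fin m → Fin n × Fin n)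
    (vs : Fin m → Perm (Fin n)) : ℕ :=
  ((univ : Finset ((Fin n × Fin n) × Fin m)).filter fun x =>
    x.1.1 < x.1.2 ∧ defectiveAt Js vs x.2 x.1.1 x.1.2).card

/-- `cdncross(W)`: the number of defective noncrossings between pairs of
paths appearing in the same column of the tableau recorded by `col`. -/
def cdncrossNum {n m : ℕ} (Js : Fin m → Fin n × Fin n) (vs : Fin m → Perm (Fin n))
    (col : Fin n → ℕ) : ℕ :=
  ((univ : Finset ((Fin n × Fin n) × Fin m)).filter fun x =>
    x.1.1 < x.1.2 ∧ defectiveAt Js vs x.2 x.1.1 x.1.2 ∧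
      ¬ crossingAt Js vs x.2 x.1.1 x.1.2 ∧ col x.1.1 = col x.1.2).card

/-- The adjacent transposition `s_{i+1}` (0-indexed: swaps positions `i` and
`i+1`). -/
def swp {n : ℕ} (i : ℕ) (h : i + 1 < n) : Perm (Fin n) :=
  Equiv.swap ⟨i, by omega⟩ ⟨i + 1, h⟩

end
/- The weight monomial statistics: the coefficient `[z_G] b_{1,w_1} ⋯ b_{n,w_n}`.
Expanding the product of path-matrix entries distributively, each term is the
weight word of a choice of a path from source `i` to sink `w i` for each `i`;
the coefficient of the square-free monomial `z_G` vanishes unless the chosen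
paths form a covering family, and for a covering family the weight word,
sorted into lexicographic order using the relations
`z_{h_2,p,k} z_{h_1,p,k} = q^{1/2} z_{h_1,p,k} z_{h_2,p,k}` (`h_1 < h_2`),
contributes `q^{inv/2}` where `inv` counts the pairs of variables appearing
out of lexicographic order. -/

noncomputable section
open Equiv Finset
open scoped Classical

/-- The number of out-of-order pairs of variables in the weight word
`wgt(π_1) ⋯ wgt(π_n)` of a covering path family: for sources `i < j`, the
variables of path `i` precede those of path `j`, and a pair of entering
(resp. leaving) variables at a common factor `p` is out of lexicographic
order exactly when path `j` is below path `i` entering (resp. leaving) the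
central vertex of `G_{J_p}`. -/
def wordInv {n m : ℕ} (Js : Fin m → Fin n × Fin n)
    (vs : Fin m → Perm (Fin n)) : ℕ :=
  ((univ : Finset ((Fin n × Fin n) × Fin m × Fin 2)).filter fun x =>
    x.1.1 < x.1.2 ∧ meetAt Js vs x.2.1 x.1.1 x.1.2 ∧
      ((x.2.2 = 0 ∧ posAt vs x.2.1 x.1.2 < posAt vs x.2.1 x.1.1) ∨
       (x.2.2 = 1 ∧ posAt vs (x.2.1.1 + 1) x.1.2 < posAt vs (x.2.1.1 + 1) x.1.1))).card

/-- `σ_B(x^{e,w}) = [z_G] b_{1,w_1} ⋯ b_{n,w_n}`, where `B` is the weighted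
path matrix of the star network `G = G_{J_1} ∘ ⋯ ∘ G_{J_m}`. -/
def zGcoeff {n m : ℕ} (Js : Fin m → Fin n × Fin n) (w : Perm (Fin n)) : R2 :=
  ∑ vs ∈ (univ : Finset (Fin m → Perm (Fin n))).filter
      (fun vs => IsPathFamily Js vs ∧ typeOf vs = w),
    Qp (wordInv Js vs : ℤ)

end
/- The quantum matrix bialgebra `A_n(q)`, presented as the quotient of the
free `R2`-algebra on the generators `x_{i,j}` by the defining relations. -/

noncomputable section
open Equiv Finset
open scoped Classical

/-- The defining relations of the quantum matrix bialgebra: for `i < j` and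
`k < l`,
`x_{i,l} x_{i,k} = q^{1/2} x_{i,k} x_{i,l}`,
`x_{j,k} x_{i,k} = q^{1/2} x_{i,k} x_{j,k}`,
`x_{j,k} x_{i,l} = x_{i,l} x_{j,k}`, and
`x_{j,l} x_{i,k} = x_{i,k} x_{j,l} + (q^{1/2} - q^{-1/2}) x_{i,l} x_{j,k}`. -/
inductive qmbRel (n : ℕ) :
    FreeAlgebra R2 (Fin n × Fin n) → FreeAlgebra R2 (Fin n × Fin n) → Prop
  | row {i k l : Fin n} (h : k < l) :
      qmbRel n (FreeAlgebra.ι R2 (i, l) * FreeAlgebra.ι R2 (i, k))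
        (Qp 1 • (FreeAlgebra.ι R2 (i, k) * FreeAlgebra.ι R2 (i, l)))
  | col {i j k : Fin n} (h : i < j) :
      qmbRel n (FreeAlgebra.ι R2 (j, k) * FreeAlgebra.ι R2 (i, k))
        (Qp 1 • (FreeAlgebra.ι R2 (i, k) * FreeAlgebra.ι R2 (j, k)))
  | comm {i j k l : Fin n} (hij : i < j) (hkl : k < l) :
      qmbRel n (FreeAlgebra.ι R2 (j, k) * FreeAlgebra.ι R2 (i, l))
        (FreeAlgebra.ι R2 (i, l) * FreeAlgebra.ι R2 (j, k))
  | quasi {i j k l : Fin n} (hij : i < j) (hkl : k < l) :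
      qmbRel n (FreeAlgebra.ι R2 (j, l) * FreeAlgebra.ι R2 (i, k))
        (FreeAlgebra.ι R2 (i, k) * FreeAlgebra.ι R2 (j, l) +
          (Qp 1 - Qp (-1)) • (FreeAlgebra.ι R2 (i, l) * FreeAlgebra.ι R2 (j, k)))

/-- The quantum matrix bialgebra `A_n(q)` (as an `R2`-algebra). -/
abbrev Aq (n : ℕ) : Type := RingQuot (qmbRel n)

/-- The generator `x_{i,j}` of `A_n(q)`. -/
def xv {n : ℕ} (ij : Fin n × Fin n) : Aq n :=
  RingQuot.mkAlgHom R2 (qmbRel n) (FreeAlgebra.ι R2 ij)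

/-- The monomial `x^{u,w} = x_{u_1,w_1} x_{u_2,w_2} ⋯ x_{u_n,w_n} ∈ A_n(q)`. -/
def xmon {n : ℕ} (u w : Perm (Fin n)) : Aq n :=
  (List.ofFn fun k : Fin n => xv (u k, w k)).prod

end

/-
Acting by left multiplication on the quantum polynomials in the edge weights (modulo monomials
with a repeated variable), the path-matrix entries `c_{i,j}` of `G_J` satisfy the defining
relations of `A_n(q)`. So `x_{i,j} ↦ c_{i,j}` is an algebra map, `σ_C` is the linear functional
`x ↦ [z_G] c(x)`, and `σ_C(x^{u,w}) = [z_G] c_{u_1,w_1} ⋯ c_{u_n,w_n}`. This product vanishes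
unless `w u⁻¹` fixes every point outside `J`; otherwise it is `q^{N/2} z_G`, where `N` counts
the pairs of paths through the centre that enter, resp. leave, in the order opposite to their
order in `U`. A crossing is counted once, an inverted noncrossing twice, and any other
noncrossing not at all.
-/
noncomputable section
open Equiv Finset
open scoped Classical
open Function

lemma Qp_add (a b : ℤ) : Qp a * Qp b = Qp (a + b) := (LaurentPolynomial.T_add a b).symm

@[simp]
lemma Qp_zero : Qp 0 = 1 := LaurentPolynomial.T_zero

section SquarefreeMonomials

variable {ι κ : Type*} [LinearOrder ι] [DecidableEq κ]

/-- The exponent of `q^{1/2}` in `z_S z_T = q^{invPairs S T / 2} z_{S ∪ T}`, where `z_S` is the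
sorted product of the variables `z_{h,k}`, `(h, k) ∈ S`, and only variables of the same kind `k`
fail to commute. -/
def invPairs (S T : Finset (ι × κ)) : ℕ :=
  #{p ∈ S ×ˢ T | p.1.2 = p.2.2 ∧ p.2.1 < p.1.1}

@[simp]
lemma invPairs_empty_left (T : Finset (ι × κ)) : invPairs ∅ T = 0 := by simp [invPairs]

@[simp]
lemma invPairs_empty_right (S : Finset (ι × κ)) : invPairs S ∅ = 0 := by simp [invPairs]

lemma invPairs_union_left {S S' : Finset (ι × κ)} (h : Disjoint S S') (T : Finset (ι × κ)) :
    invPairs (S ∪ S') T = invPairs S T + invPairs S' T := by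
  rw [invPairs, union_product, filter_union, card_union_of_disjoint]
  · rfl
  · exact disjoint_filter_filter (disjoint_product.mpr (Or.inl h))

lemma invPairs_union_right {T T' : Finset (ι × κ)} (h : Disjoint T T') (S : Finset (ι × κ)) :
    invPairs S (T ∪ T') = invPairs S T + invPairs S T' := by
  rw [invPairs, product_union, filter_union, card_union_of_disjoint]
  · rfl
  · exact disjoint_filter_filter (disjoint_product.mpr (Or.inr h))

lemma invPairs_sup {N : Type*} {f : N → Finset (ι × κ)} (hf : Pairwise (Disjoint on f))
    (S : Finset (ι × κ)) (s : Finset N) :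
    invPairs S (s.sup f) = ∑ k ∈ s, invPairs S (f k) := by
  induction s using Finset.cons_induction with
  | empty => simp
  | cons a s ha ih =>
    have hdisj : Disjoint (f a) (s.sup f) :=
      Finset.disjoint_sup_right.mpr fun k hk => hf (ne_of_mem_of_not_mem hk ha).symm
    rw [sup_cons, sum_cons, sup_eq_union, invPairs_union_right hdisj, ih]

/-- Left multiplication by `z_S` on coefficient vectors, `m T` being the coefficient of `z_T`.
Monomials with a repeated variable span a two-sided ideal, which is discarded: it cannot
contribute to the coefficient of a squarefree monomial. -/
def monoMul (S : Finset (ι × κ)) : Module.End R2 (Finset (ι × κ) → R2) where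
  toFun m T := if S ⊆ T then Qp (invPairs S (T \ S)) * m (T \ S) else 0
  map_add' x y := by funext T; split_ifs <;> simp [mul_add, *]
  map_smul' r x := by funext T; split_ifs <;> simp [mul_left_comm, *]

lemma monoMul_apply (S : Finset (ι × κ)) (m : Finset (ι × κ) → R2) (T : Finset (ι × κ)) :
    monoMul S m T = if S ⊆ T then Qp (invPairs S (T \ S)) * m (T \ S) else 0 := rfl

@[simp]
lemma monoMul_empty : monoMul (∅ : Finset (ι × κ)) = 1 := by
  refine LinearMap.ext fun m => funext fun T => ?_
  simp [monoMul_apply]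

lemma monoMul_single_empty_self (S : Finset (ι × κ)) :
    monoMul S (Pi.single ∅ 1) S = 1 := by
  simp [monoMul_apply]

lemma monoMul_mul_of_disjoint {S T : Finset (ι × κ)} (h : Disjoint S T) :
    monoMul S * monoMul T = Qp (invPairs S T) • monoMul (S ∪ T) := by
  refine LinearMap.ext fun m => funext fun U => ?_
  simp only [Module.End.mul_apply, LinearMap.smul_apply, Pi.smul_apply, smul_eq_mul,
    monoMul_apply, subset_sdiff, union_subset_iff]
  by_cases hS : S ⊆ U
  · by_cases hT : T ⊆ U
    · have hU : (U \ S) \ T = U \ (S ∪ T) := sdiff_sdiff_left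
      have hsplit : U \ S = T ∪ U \ (S ∪ T) := by
        rw [← hU, union_sdiff_of_subset (subset_sdiff.mpr ⟨hT, h.symm⟩)]
      have hdisj : Disjoint T (U \ (S ∪ T)) := disjoint_sdiff.mono_left subset_union_right
      simp only [hS, hT, h.symm, and_self, if_true, ← mul_assoc, Qp_add, hU]
      rw [hsplit, invPairs_union_right hdisj, invPairs_union_left h]
      push_cast
      ring_nf
    · simp [hS, hT]
  · simp [hS]

lemma monoMul_mul_of_not_disjoint {S T : Finset (ι × κ)} (h : ¬ Disjoint S T) :
    monoMul S * monoMul T = 0 := by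
  refine LinearMap.ext fun m => funext fun U => ?_
  simp only [Module.End.mul_apply, monoMul_apply, subset_sdiff, LinearMap.zero_apply,
    Pi.zero_apply]
  split_ifs <;> simp_all [disjoint_comm]

def pairInv {N : ℕ} (f : Fin N → Finset (ι × κ)) : ℕ :=
  ∑ k, ∑ k', if k < k' then invPairs (f k) (f k') else 0

lemma pairInv_succ {N : ℕ} (f : Fin (N + 1) → Finset (ι × κ)) :
    pairInv f = ∑ k : Fin N, invPairs (f 0) (f k.succ) + pairInv fun k => f k.succ := by
  simp [pairInv, Fin.sum_univ_succ, Fin.succ_pos]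

lemma prod_ofFn_monoMul {N : ℕ} {f : Fin N → Finset (ι × κ)} (hf : Pairwise (Disjoint on f)) :
    (List.ofFn fun k => monoMul (f k)).prod = Qp (pairInv f) • monoMul (univ.sup f) := by
  induction N with
  | zero => simp [pairInv]
  | succ N ih =>
    have hf' : Pairwise (Disjoint on fun k : Fin N => f k.succ) :=
      fun i j hij => hf ((Fin.succ_injective N).ne hij)
    have hdisj : Disjoint (f 0) (univ.sup fun k : Fin N => f k.succ) :=
      Finset.disjoint_sup_right.mpr fun k _ => hf (Fin.succ_ne_zero k).symm
    rw [List.ofFn_succ, List.prod_cons, ih hf', mul_smul_comm, monoMul_mul_of_disjoint hdisj,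
      smul_smul, Qp_add, invPairs_sup hf', pairInv_succ, Fin.univ_succ, sup_cons, sup_map,
      sup_eq_union, add_comm]
    push_cast
    rfl

end SquarefreeMonomials

section SimpleStar

variable {n : ℕ} {J : Fin n × Fin n}

/-- The variables `z_{i,1,1}`, `z_{j,1,2}` of the path from source `i` through the central vertex
to sink `j`; the second coordinate `0` / `1` marks the entering / leaving edge. -/
def centerPathVars (i j : Fin n) : Finset (Fin n × Fin 2) := {(i, 0), (j, 1)}

lemma invPairs_centerPathVars (p q r s : Fin n) :
    invPairs (centerPathVars p q) (centerPathVars r s) =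
      (if r < p then 1 else 0) + (if s < q then 1 else 0) := by
  have hp : (p, (0 : Fin 2)) ∉ ({(q, 1)} : Finset _) := by simp
  have hr : (r, (0 : Fin 2)) ∉ ({(s, 1)} : Finset _) := by simp
  rw [invPairs, card_filter, sum_product, centerPathVars, centerPathVars, sum_insert hp,
    sum_singleton, sum_insert hr, sum_insert hr, sum_singleton, sum_singleton]
  simp

lemma disjoint_centerPathVars_iff {p q r s : Fin n} :
    Disjoint (centerPathVars p q) (centerPathVars r s) ↔ p ≠ r ∧ q ≠ s := by
  simp [centerPathVars, eq_comm]

lemma centerPathVars_union_comm (i j k l : Fin n) :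
    centerPathVars i l ∪ centerPathVars j k = centerPathVars j l ∪ centerPathVars i k := by
  ext x
  simp only [centerPathVars, mem_union, mem_insert, mem_singleton]
  tauto

/-- The entry `c_{i,j}` of the weighted path matrix of `G_J`, acting by left multiplication. -/
def pathWeight (J : Fin n × Fin n) (i j : Fin n) :
    Module.End R2 (Finset (Fin n × Fin 2) → R2) :=
  if memJ J i ∧ memJ J j then monoMul (centerPathVars i j) else if i = j then 1 else 0

lemma pathWeight_of_mem {i j : Fin n} (h : memJ J i ∧ memJ J j) :
    pathWeight J i j = monoMul (centerPathVars i j) :=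
  if_pos h

lemma commute_pathWeight_of_not_mem {i j : Fin n} (h : ¬ (memJ J i ∧ memJ J j))
    (x : Module.End R2 (Finset (Fin n × Fin 2) → R2)) : Commute (pathWeight J i j) x := by
  rw [pathWeight, if_neg h]
  split_ifs
  exacts [Commute.one_left x, Commute.zero_left x]

lemma pathWeight_mul_pathWeight_of_ne_right {i k l : Fin n} (h : k ≠ l) :
    pathWeight J i k * pathWeight J i l = 0 := by
  unfold pathWeight
  split_ifs <;> simp_all [monoMul_mul_of_not_disjoint, disjoint_centerPathVars_iff]

lemma pathWeight_mul_pathWeight_of_ne_left {i j k : Fin n} (h : i ≠ j) :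
    pathWeight J i k * pathWeight J j k = 0 := by
  unfold pathWeight
  split_ifs <;> simp_all [monoMul_mul_of_not_disjoint, disjoint_centerPathVars_iff]

lemma pathWeight_mul_pathWeight_eq_zero_of_not_mem {i j k l : Fin n} (hij : i < j)
    (hkl : k < l) (h : ¬ (memJ J i ∧ memJ J j ∧ memJ J k ∧ memJ J l)) :
    pathWeight J i l * pathWeight J j k = 0 := by
  -- A nonzero product needs `i = l ∉ J` or `j = k ∉ J`; as `k < l = i < j`, resp.
  -- `i < j = k < l`, this index lies strictly between the other two, and `J` is an interval.
  unfold pathWeight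
  split_ifs <;> first
    | simp only [mul_zero, zero_mul]
    | (subst_vars; simp only [memJ, Fin.le_def, Fin.lt_def] at *; omega)

lemma pathWeight_row {i k l : Fin n} (h : k < l) :
    pathWeight J i l * pathWeight J i k = Qp 1 • (pathWeight J i k * pathWeight J i l) := by
  rw [pathWeight_mul_pathWeight_of_ne_right h.ne', pathWeight_mul_pathWeight_of_ne_right h.ne,
    smul_zero]

lemma pathWeight_col {i j k : Fin n} (h : i < j) :
    pathWeight J j k * pathWeight J i k = Qp 1 • (pathWeight J i k * pathWeight J j k) := by
  rw [pathWeight_mul_pathWeight_of_ne_left h.ne', pathWeight_mul_pathWeight_of_ne_left h.ne,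
    smul_zero]

lemma pathWeight_comm {i j k l : Fin n} (hij : i < j) (hkl : k < l) :
    pathWeight J j k * pathWeight J i l = pathWeight J i l * pathWeight J j k := by
  by_cases hjk : memJ J j ∧ memJ J k
  · by_cases hil : memJ J i ∧ memJ J l
    · rw [pathWeight_of_mem hjk, pathWeight_of_mem hil,
        monoMul_mul_of_disjoint (disjoint_centerPathVars_iff.mpr ⟨hij.ne', hkl.ne⟩),
        monoMul_mul_of_disjoint (disjoint_centerPathVars_iff.mpr ⟨hij.ne, hkl.ne'⟩),
        invPairs_centerPathVars, invPairs_centerPathVars, union_comm]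
      simp [hij, hkl, hij.not_gt, hkl.not_gt]
    · exact (commute_pathWeight_of_not_mem hil _).symm.eq
  · exact (commute_pathWeight_of_not_mem hjk _).eq

lemma pathWeight_quasi {i j k l : Fin n} (hij : i < j) (hkl : k < l) :
    pathWeight J j l * pathWeight J i k =
      pathWeight J i k * pathWeight J j l +
        (Qp 1 - Qp (-1)) • (pathWeight J i l * pathWeight J j k) := by
  by_cases hall : memJ J i ∧ memJ J j ∧ memJ J k ∧ memJ J l
  · obtain ⟨hi, hj, hk, hl⟩ := hall
    rw [pathWeight_of_mem ⟨hj, hl⟩, pathWeight_of_mem ⟨hi, hk⟩, pathWeight_of_mem ⟨hi, hl⟩,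
      pathWeight_of_mem ⟨hj, hk⟩,
      monoMul_mul_of_disjoint (disjoint_centerPathVars_iff.mpr ⟨hij.ne', hkl.ne'⟩),
      monoMul_mul_of_disjoint (disjoint_centerPathVars_iff.mpr ⟨hij.ne, hkl.ne⟩),
      monoMul_mul_of_disjoint (disjoint_centerPathVars_iff.mpr ⟨hij.ne, hkl.ne'⟩),
      invPairs_centerPathVars, invPairs_centerPathVars, invPairs_centerPathVars,
      union_comm (centerPathVars i k), centerPathVars_union_comm i j k l, smul_smul, ← add_smul]
    congr 1
    -- `q = 1 + (q^{1/2} - q^{-1/2}) q^{1/2}`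
    simp only [hij, hkl, hij.not_gt, hkl.not_gt, if_true, if_false, sub_mul, Qp_add]
    norm_num
  · rw [pathWeight_mul_pathWeight_eq_zero_of_not_mem hij hkl hall, smul_zero, add_zero]
    by_cases hjl : memJ J j ∧ memJ J l
    · exact (commute_pathWeight_of_not_mem
        (fun hik => hall ⟨hik.1, hjl.1, hik.2, hjl.2⟩) _).symm.eq
    · exact (commute_pathWeight_of_not_mem hjl _).eq

def starRep (J : Fin n × Fin n) : Aq n →ₐ[R2] Module.End R2 (Finset (Fin n × Fin 2) → R2) :=
  RingQuot.liftAlgHom R2 ⟨FreeAlgebra.lift R2 fun ij => pathWeight J ij.1 ij.2, by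
    intro a b h
    cases h with
    | row h => simpa using pathWeight_row h
    | col h => simpa using pathWeight_col h
    | comm hij hkl => simpa using pathWeight_comm hij hkl
    | quasi hij hkl => simpa using pathWeight_quasi hij hkl⟩

lemma starRep_xmon (J : Fin n × Fin n) (u w : Perm (Fin n)) :
    starRep J (xmon u w) = (List.ofFn fun k => pathWeight J (u k) (w k)).prod := by
  simp [xmon, xv, starRep, map_list_prod, List.map_ofFn, Function.comp_def]

end SimpleStar

section SigmaStar

variable {n : ℕ} {J : Fin n × Fin n}

lemma inSJ.memJ_apply_iff {σ : Perm (Fin n)} (hs : inSJ J σ) (i : Fin n) :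
    memJ J (σ i) ↔ memJ J i := by
  by_cases h : σ i = i
  · rw [h]
  · exact iff_of_true (hs _ fun h' => h (σ.injective h')) (hs i h)

/-- The variables of `z_G`. -/
def starVars (J : Fin n × Fin n) : Finset (Fin n × Fin 2) := {v | memJ J v.1}

/-- `σ_C`: the coefficient of `z_G` in `c(x) · 1`, where `c = starRep J`. -/
def sigmaStar (J : Fin n × Fin n) : Aq n →ₗ[R2] R2 :=
  (LinearMap.proj (starVars J)).comp
    ((LinearMap.applyₗ (Pi.single ∅ 1)).comp (starRep J).toLinearMap)

lemma sigmaStar_apply (x : Aq n) :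
    sigmaStar J x = starRep J x (Pi.single ∅ 1) (starVars J) :=
  rfl

/-- The variables of the path from source `u k` to sink `w k`. -/
def pathVars (J : Fin n × Fin n) (u w : Perm (Fin n)) (k : Fin n) : Finset (Fin n × Fin 2) :=
  if memJ J (u k) then centerPathVars (u k) (w k) else ∅

lemma pairwise_disjoint_pathVars (u w : Perm (Fin n)) :
    Pairwise (Disjoint on pathVars J u w) := by
  intro k k' hkk'
  simp only [onFun, pathVars]
  split_ifs
  · exact disjoint_centerPathVars_iff.mpr ⟨u.injective.ne hkk', w.injective.ne hkk'⟩
  all_goals simp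

lemma pathWeight_eq_monoMul_pathVars {u w : Perm (Fin n)} (hs : inSJ J (w * u⁻¹)) (k : Fin n) :
    pathWeight J (u k) (w k) = monoMul (pathVars J u w k) := by
  have hwk : (w * u⁻¹) (u k) = w k := by simp
  by_cases hm : memJ J (u k)
  · rw [pathVars, if_pos hm, pathWeight_of_mem ⟨hm, hwk ▸ (hs.memJ_apply_iff _).mpr hm⟩]
  · have hfix : u k = w k := by
      by_contra hne
      exact hm (hs _ (hwk ▸ Ne.symm hne))
    rw [pathVars, if_neg hm, monoMul_empty, pathWeight, if_neg fun h => hm h.1, if_pos hfix]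

lemma sup_pathVars {u w : Perm (Fin n)} (hs : inSJ J (w * u⁻¹)) :
    univ.sup (pathVars J u w) = starVars J := by
  have hw : ∀ k, memJ J (w k) ↔ memJ J (u k) := fun k => by
    simpa using hs.memJ_apply_iff (u k)
  ext ⟨h, c⟩
  simp only [mem_sup, mem_univ, true_and, pathVars, starVars, mem_filter]
  constructor
  · rintro ⟨k, hk⟩
    split_ifs at hk with hm
    · simp only [centerPathVars, mem_insert, mem_singleton, Prod.mk.injEq] at hk
      rcases hk with ⟨rfl, -⟩ | ⟨rfl, -⟩
      exacts [hm, (hw k).mpr hm]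
    · simp at hk
  · intro hh
    fin_cases c
    · exact ⟨u⁻¹ h, by simp [centerPathVars, hh]⟩
    · exact ⟨w⁻¹ h, by simp [centerPathVars, ← hw, hh]⟩

lemma sigmaStar_xmon_of_inSJ {u w : Perm (Fin n)} (hs : inSJ J (w * u⁻¹)) :
    sigmaStar J (xmon u w) = Qp (pairInv (pathVars J u w)) := by
  rw [sigmaStar_apply, starRep_xmon, funext (pathWeight_eq_monoMul_pathVars hs),
    prod_ofFn_monoMul (pairwise_disjoint_pathVars u w), sup_pathVars hs]
  simp [monoMul_single_empty_self]

lemma sigmaStar_xmon_of_not_inSJ {u w : Perm (Fin n)} (hs : ¬ inSJ J (w * u⁻¹)) :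
    sigmaStar J (xmon u w) = 0 := by
  obtain ⟨i, hmove, hi⟩ : ∃ i, (w * u⁻¹) i ≠ i ∧ ¬ memJ J i := by simpa [inSJ] using hs
  have hzero : pathWeight J (u (u⁻¹ i)) (w (u⁻¹ i)) = 0 := by
    rw [pathWeight, if_neg fun h => hi (by simpa using h.1), if_neg]
    simpa [eq_comm] using hmove
  rw [sigmaStar_apply, starRep_xmon, List.prod_eq_zero (List.mem_ofFn.mpr ⟨u⁻¹ i, hzero⟩)]
  rfl

end SigmaStar

section Counting

variable {n : ℕ} {J : Fin n × Fin n}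

@[simp]
lemma posAt_zero {m : ℕ} (vs : Fin m → Perm (Fin n)) : posAt vs 0 = 1 := by
  simp [posAt]

@[simp]
lemma posAt_one (vs : Fin 1 → Perm (Fin n)) : posAt vs 1 = vs 0 := by
  simp [posAt, List.ofFn_succ]

lemma crossNum_single (σ : Perm (Fin n)) :
    crossNum (fun _ : Fin 1 => J) (fun _ => σ) =
      ∑ i, ∑ j, if i < j ∧ memJ J i ∧ memJ J j ∧ σ j < σ i then 1 else 0 := by
  rw [crossNum, card_filter, Fintype.sum_prod_type, Fintype.sum_prod_type]
  refine sum_congr rfl fun i _ => sum_congr rfl fun j _ => ?_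
  have hσ : σ i = σ j ↔ i = j := σ.injective.eq_iff
  simp only [crossingAt, meetAt, centeredAt, memJ, Fin.sum_univ_one, posAt_zero, posAt_one,
    Fin.val_zero, zero_add, Perm.one_apply, Fin.ext_iff, Fin.lt_def, Fin.le_def] at hσ ⊢
  split_ifs <;> omega

lemma incrossNum_single (σ : Perm (Fin n)) (col : Fin n → ℕ) :
    incrossNum (fun _ : Fin 1 => J) (fun _ => σ) col =
      ∑ i, ∑ j, if i < j ∧ memJ J i ∧ memJ J j ∧ σ i < σ j ∧ col j < col i then 1 else 0 := by
  rw [incrossNum, card_filter, Fintype.sum_prod_type, Fintype.sum_prod_type]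
  refine sum_congr rfl fun i _ => sum_congr rfl fun j _ => ?_
  simp only [noncrossBelow, meetAt, centeredAt, memJ, Fin.sum_univ_one, posAt_zero, posAt_one,
    Fin.val_zero, zero_add, Perm.one_apply, Fin.lt_def, Fin.le_def]
  split_ifs <;> omega

lemma wordInv_single (σ : Perm (Fin n)) :
    wordInv (fun _ : Fin 1 => J) (fun _ => σ) =
      ∑ i, ∑ j, if i < j ∧ memJ J i ∧ memJ J j ∧ σ j < σ i then 1 else 0 := by
  rw [wordInv, card_filter, Fintype.sum_prod_type, Fintype.sum_prod_type]
  refine sum_congr rfl fun i _ => sum_congr rfl fun j _ => ?_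
  simp only [meetAt, centeredAt, memJ, Fintype.sum_prod_type, Fin.sum_univ_one,
    Fin.sum_univ_two, posAt_zero, posAt_one, Fin.val_zero, zero_add, Perm.one_apply, Fin.lt_def,
    Fin.le_def]
  simp only [Fin.isValue, zero_ne_one, one_ne_zero, false_and, or_false, false_or, true_and]
  split_ifs <;> omega

lemma pairInv_pathVars_eq_sum (u w : Perm (Fin n)) :
    pairInv (pathVars J u w) =
      ∑ k, ∑ k', ((if k < k' ∧ memJ J (u k) ∧ memJ J (u k') ∧ u k' < u k then 1 else 0) +
        (if k < k' ∧ memJ J (u k) ∧ memJ J (u k') ∧ w k' < w k then 1 else 0)) := by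
  refine sum_congr rfl fun k _ => sum_congr rfl fun k' _ => ?_
  by_cases hk : memJ J (u k) <;> by_cases hk' : memJ J (u k') <;>
    simp [pathVars, hk, hk', invPairs_centerPathVars, ite_and]
  split_ifs <;> rfl

lemma sum_sum_eq_of_add_swap {α : Type*} [Fintype α] {f g : α → α → ℕ}
    (h : ∀ i j, f i j + f j i = g i j + g j i) : ∑ i, ∑ j, f i j = ∑ i, ∑ j, g i j := by
  have hsymm : ∀ F : α → α → ℕ, 2 * ∑ i, ∑ j, F i j = ∑ i, ∑ j, (F i j + F j i) := by
    intro F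
    rw [two_mul]
    nth_rw 2 [sum_comm]
    simp only [sum_add_distrib]
  have hfg := sum_congr rfl fun i (_ : i ∈ univ) => sum_congr rfl fun j (_ : j ∈ univ) => h i j
  have := hsymm f
  have := hsymm g
  omega

lemma pairInv_pathVars (u w : Perm (Fin n)) :
    pairInv (pathVars J u w) =
      crossNum (fun _ : Fin 1 => J) (fun _ => w * u⁻¹) +
        2 * incrossNum (fun _ : Fin 1 => J) (fun _ => w * u⁻¹)
          (fun i => ((u⁻¹ i : Fin n) : ℕ)) := by
  set σ := w * u⁻¹
  let pairTerm : Fin n → Fin n → ℕ := fun i j =>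
    (if u⁻¹ i < u⁻¹ j ∧ memJ J i ∧ memJ J j ∧ j < i then 1 else 0) +
      (if u⁻¹ i < u⁻¹ j ∧ memJ J i ∧ memJ J j ∧ σ j < σ i then 1 else 0)
  have hreindex : pairInv (pathVars J u w) = ∑ i, ∑ j, pairTerm i j := by
    rw [pairInv_pathVars_eq_sum, ← Equiv.sum_comp u (fun i => ∑ j, pairTerm i j)]
    refine sum_congr rfl fun k _ => ?_
    rw [← Equiv.sum_comp u (pairTerm (u k))]
    simp [pairTerm, σ]
  rw [hreindex, crossNum_single, incrossNum_single]
  simp only [mul_sum, ← sum_add_distrib]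
  -- Over a pair `{i, j}` of paths through the centre, both sides count `1` for a crossing, `2`
  -- for a noncrossing that `U` lists against its vertical order, and `0` otherwise.
  refine sum_sum_eq_of_add_swap fun i j => ?_
  by_cases hij : i = j
  · simp [pairTerm, hij]
  have hσ : (σ i : ℕ) ≠ σ j := Fin.val_ne_iff.mpr (σ.injective.ne hij)
  have hu : ((u⁻¹ i : Fin n) : ℕ) ≠ u⁻¹ j := Fin.val_ne_iff.mpr ((u⁻¹).injective.ne hij)
  have hij' : (i : ℕ) ≠ j := Fin.val_ne_iff.mpr hij
  simp only [pairTerm, memJ, Fin.lt_def, Fin.le_def]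
  split_ifs <;> omega

end Counting

section Interpretation

variable {n : ℕ} {J : Fin n × Fin n}

lemma sigmaStar_xmon (u w : Perm (Fin n)) :
    sigmaStar J (xmon u w) =
      if inSJ J (w * u⁻¹) then
        Qp ((crossNum (fun _ : Fin 1 => J) (fun _ => w * u⁻¹) +
          2 * incrossNum (fun _ : Fin 1 => J) (fun _ => w * u⁻¹)
            (fun i => ((u⁻¹ i : Fin n) : ℕ)) : ℕ) : ℤ)
      else 0 := by
  split_ifs with hs
  · rw [sigmaStar_xmon_of_inSJ hs, pairInv_pathVars]
  · exact sigmaStar_xmon_of_not_inSJ hs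

lemma zGcoeff_single (v : Perm (Fin n)) :
    zGcoeff (fun _ : Fin 1 => J) v =
      if inSJ J v then Qp (wordInv (fun _ : Fin 1 => J) (fun _ => v)) else 0 := by
  have hfamily : (univ : Finset (Fin 1 → Perm (Fin n))).filter
      (fun vs => IsPathFamily (fun _ => J) vs ∧ typeOf vs = v) =
        if inSJ J v then {fun _ => v} else ∅ := by
    ext vs
    split_ifs with hs <;>
      simp only [mem_filter, mem_univ, true_and, IsPathFamily, typeOf, posAt_one,
        Fin.forall_fin_one, mem_singleton, notMem_empty, funext_iff] <;>
      grind
  rw [zGcoeff, hfamily]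
  split_ifs <;> simp

lemma zGcoeff_single_eq_sigmaStar (v : Perm (Fin n)) :
    zGcoeff (fun _ : Fin 1 => J) v = sigmaStar J (xmon 1 v) := by
  have hincross : incrossNum (fun _ : Fin 1 => J) (fun _ => v) (fun i => (i : ℕ)) = 0 := by
    simp only [incrossNum_single, Fin.lt_def]
    exact sum_eq_zero fun i _ => sum_eq_zero fun j _ => if_neg (by omega)
  simp [zGcoeff_single, sigmaStar_xmon, wordInv_single, crossNum_single, hincross]

end Interpretation

/-- The path family `π` is encoded by the permutation `w * u⁻¹` it induces at the central vertex,
the column of `π_i` in `U(π,u,w)` is `u⁻¹ i`, and `c` gives the coordinates of `x^{u,w}` in the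
basis `{x^{e,v}}`. -/
theorem sigma_simple_star_interpretation_general
    {n : ℕ} (J : Fin n × Fin n)
    (u w : Perm (Fin n)) (c : Perm (Fin n) → R2)
    (hc : xmon u w = ∑ v : Perm (Fin n), c v • xmon 1 v) :
    (inSJ J (w * u⁻¹) →
      ∑ v : Perm (Fin n), c v * zGcoeff (fun _ : Fin 1 => J) v =
        Qp ((crossNum (fun _ : Fin 1 => J) (fun _ : Fin 1 => w * u⁻¹) +
          2 * incrossNum (fun _ : Fin 1 => J) (fun _ : Fin 1 => w * u⁻¹)
            (fun i => ((u⁻¹ i : Fin n) : ℕ)) : ℕ) : ℤ)) ∧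
    (¬ inSJ J (w * u⁻¹) →
      ∑ v : Perm (Fin n), c v * zGcoeff (fun _ : Fin 1 => J) v = 0) := by
  have hsigma : ∑ v, c v * zGcoeff (fun _ : Fin 1 => J) v = sigmaStar J (xmon u w) := by
    simp only [zGcoeff_single_eq_sigmaStar, hc, map_sum, map_smul, smul_eq_mul]
  rw [hsigma, sigmaStar_xmon]
  exact ⟨fun hs => if_pos hs, fun hs => if_neg hs⟩

/-- Lemma 3.2 / `l:sigmareversalinterp`.  Let the simple
star network `G_J` have weighted path matrix `C`.  For `u, w ∈ S_n`: if
`u⁻¹w ∈ S_J` then `σ_C(x^{u,w}) = q^{cross(π)/2} q^{incross(U(π,u,w))}`,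
where `π` is the unique path family of type `u⁻¹w` covering `G_J` (encoded by
the single permutation `w ∘ u⁻¹` supported on `J`) and `U(π,u,w)` is the
one-row `π`-tableau `π_{u_1} ⋯ π_{u_n}` (so the column of `π_i` is `u⁻¹(i)`);
otherwise `σ_C(x^{u,w}) = 0`.  Here `σ_C(x^{u,w})` is evaluated by expanding
`x^{u,w}` in the basis `{x^{e,v}}` of the immanant space of `A_n(q)` (the
unique coefficients `c`) and applying `x^{e,v} ↦ [z_G] c_{1,v_1} ⋯ c_{n,v_n}`. -/
theorem sigma_simple_star_interpretation
    {n : ℕ} (J : Fin n × Fin n) (hJ : J.1 ≤ J.2)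
    (u w : Perm (Fin n)) (c : Perm (Fin n) → R2)
    (hc : xmon u w = ∑ v : Perm (Fin n), c v • xmon 1 v) :
    (inSJ J (w * u⁻¹) →
      ∑ v : Perm (Fin n), c v * zGcoeff (fun _ : Fin 1 => J) v =
        Qp ((crossNum (fun _ : Fin 1 => J) (fun _ : Fin 1 => w * u⁻¹) +
          2 * incrossNum (fun _ : Fin 1 => J) (fun _ : Fin 1 => w * u⁻¹)
            (fun i => ((u⁻¹ i : Fin n) : ℕ)) : ℕ) : ℤ)) ∧
    (¬ inSJ J (w * u⁻¹) →
      ∑ v : Perm (Fin n), c v * zGcoeff (fun _ : Fin 1 => J) v = 0) :=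
  sigma_simple_star_interpretation_general J u w c hc

end
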